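/- Let V be a real vector space with a symmetric bilinear form g, let S be a real vector space, and let γ : V → End(S) be a linear map satisfying the Clifford relation γ(u) ∘ γ(v) + γ(v) ∘ γ(u) = −2 g(u,v) · id_S for all u, v ∈ V. On the tractor space T := ℝ × V × ℝ define the tractor Clifford multiplication Γ : T → End(S × S) by Γ(ρ,u,σ)(τ,χ) := (−γ(u)τ + √2·ρ·χ, γ(u)χ − √2·σ·τ). Let b : S × S → ℝ be a symmetric bilinear form and ε ∈ ℝ with ε² = 1, such that b is Clifford invariant in the sense that b(γ(u)χ, χ') + ε · b(χ, γ(u)χ') = 0 for all u ∈ V and χ, χ' ∈ S. Define the tractor spinor pairing B : (S × S) × (S × S) → ℝ by B((τ,χ),(τ',χ')) := b(χ,τ') + ε · b(χ',τ). Then B(Γ(t)X, X') − ε · B(X, Γ(t)X') = 0 for all t ∈ T and X, X' ∈ S × S. (In the paper, ε = (−1)^{p+1} for signature (p,q), so this is the invariance B(t·X,X') + (−1)^p B(X,t·X') = 0.) -/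
import Mathlib


/-- Tractor Clifford multiplication `Γ : T → End(S × S)`:
`Γ(ρ,u,σ)(τ,χ) = (−γ(u)τ + √2·ρ·χ, γ(u)χ − √2·σ·τ)`. -/
noncomputable def tractorClifford {V S : Type*} [AddCommGroup V] [Module ℝ V]
    [AddCommGroup S] [Module ℝ S]
    (γ : V →ₗ[ℝ] Module.End ℝ S) (t : ℝ × V × ℝ) (X : S × S) : S × S :=
  (-(γ t.2.1 X.1) + (Real.sqrt 2 * t.1) • X.2,
    γ t.2.1 X.2 - (Real.sqrt 2 * t.2.2) • X.1)

/-- The tractor spinor pairing `B((τ,χ),(τ',χ')) = b(χ,τ') + ε·b(χ',τ)`. -/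
def tractorSpinorPairing {S : Type*} [AddCommGroup S] [Module ℝ S]
    (b : S →ₗ[ℝ] S →ₗ[ℝ] ℝ) (ε : ℝ) (X X' : S × S) : ℝ :=
  b X.2 X'.1 + ε * b X'.2 X.1

/-- If `b` is a symmetric Clifford-invariant pairing on `S`, i.e.
`b(γ(u)χ, χ') + ε·b(χ, γ(u)χ') = 0` with `ε² = 1` (in the paper `ε = (−1)^{p+1}`),
then the tractor spinor pairing `B` is Clifford invariant for the tractor
Clifford multiplication: `B(Γ(t)X, X') − ε·B(X, Γ(t)X') = 0`. -/
theorem tractorSpinorPairing_clifford_invariant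
    {V S : Type*} [AddCommGroup V] [Module ℝ V] [AddCommGroup S] [Module ℝ S]
    (g : V →ₗ[ℝ] V →ₗ[ℝ] ℝ) (hg : ∀ u v : V, g u v = g v u)
    (γ : V →ₗ[ℝ] Module.End ℝ S)
    (hγ : ∀ u v : V, γ u ∘ₗ γ v + γ v ∘ₗ γ u
      = (-(2 * g u v)) • (LinearMap.id : S →ₗ[ℝ] S))
    (b : S →ₗ[ℝ] S →ₗ[ℝ] ℝ) (hb : ∀ χ χ' : S, b χ χ' = b χ' χ)
    (ε : ℝ) (hε : ε ^ 2 = 1)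
    (hbinv : ∀ (u : V) (χ χ' : S), b (γ u χ) χ' + ε * b χ (γ u χ') = 0) :
    ∀ (t : ℝ × V × ℝ) (X X' : S × S),
      tractorSpinorPairing b ε (tractorClifford γ t X) X' -
        ε * tractorSpinorPairing b ε X (tractorClifford γ t X') = 0 := by
  intro t X X'
  simp only [tractorSpinorPairing, tractorClifford, map_add, map_sub, map_neg, map_smul,
    LinearMap.add_apply, LinearMap.sub_apply, LinearMap.neg_apply, LinearMap.smul_apply,
    smul_eq_mul]
  have h1 := hbinv t.2.1 X.2 X'.1
  have h2 := hbinv t.2.1 X'.2 X.1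
  have s1 := hb X.1 X'.1
  have s2 := hb X.2 X'.2
  linear_combination h1 - ε ^ 2 * h2 +
    (ε * (b X'.2) ((γ t.2.1) X.1) + Real.sqrt 2 * t.2.2 * (b X'.1) X.1) * hε -
    Real.sqrt 2 * t.2.2 * s1 - Real.sqrt 2 * t.1 * ε * s2
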